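/- arXiv:1504.06891 — 6 statements merged into one kernel-verified Lean document; each statement's English description precedes it below -/
import Mathlib

section
/- Let X be a Hausdorff hemicompact topological space that is a Tanaka space. Then X has at least one point admitting a compact neighborhood. -/
open Filter Topology Set

variable {X : Type*}

/-- A sequence `x` meshes with a filter `H` if every tail of the sequence meets every
member of `H`. -/
def SeqMeshes (x : ℕ → X) (H : Filter X) : Prop :=
  ∀ B ∈ H, ∀ k : ℕ, ∃ n ≥ k, x n ∈ B

/-- The adherence of a filter: the intersection of the closures of its members. -/
def adh [TopologicalSpace X] (H : Filter X) : Set X :=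
  ⋂ A ∈ H, closure A

/-- A hemicompact space. -/
def Hemicompact (X : Type*) [TopologicalSpace X] : Prop :=
  ∃ K : ℕ → Set X, (∀ n, IsCompact (K n)) ∧ ∀ C : Set X, IsCompact C → ∃ n, C ⊆ K n

/-- A Tanaka space. -/
def TanakaSpace (X : Type*) [TopologicalSpace X] : Prop :=
  ∀ H : Filter X, H.IsCountablyGenerated → (adh H).Nonempty →
    ∃ (x : ℕ → X) (l : X), Tendsto x atTop (𝓝 l) ∧ SeqMeshes x H

/-
If no point had a compact neighbourhood, every compact set would have empty interior, so every
member of the cocompact filter would be dense and its adherence would be all of `X`. Hemicompactness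
makes the cocompact filter countably generated, so the Tanaka property yields a convergent sequence
meshing with it. But the sequence together with its limit is compact, and the complement of that
compact set is a member of the cocompact filter that the sequence never enters.
-/

theorem Hemicompact.isCountablyGenerated_cocompact [TopologicalSpace X] (h : Hemicompact X) :
    (cocompact X).IsCountablyGenerated := by
  obtain ⟨K, hK, hKcover⟩ := h
  refine isCountablyGenerated_of_seq ⟨fun n => (K n)ᶜ, le_antisymm ?_ ?_⟩
  · exact le_iInf fun n => le_principal_iff.2 (hK n).compl_mem_cocompact
  · refine hasBasis_cocompact.ge_iff.2 fun C hC => ?_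
    obtain ⟨n, hCn⟩ := hKcover C hC
    exact mem_iInf_of_mem n (compl_subset_compl.2 hCn)

theorem adh_cocompact_eq_univ [TopologicalSpace X]
    (h : ∀ (x : X) (K : Set X), K ∈ 𝓝 x → ¬IsCompact K) : adh (cocompact X) = univ := by
  refine eq_univ_of_forall fun x => mem_iInter₂.2 fun A hA => ?_
  obtain ⟨K, hK, hKA⟩ := mem_cocompact.1 hA
  have hx : x ∉ interior K := fun hx => h x K (mem_interior_iff_mem_nhds.1 hx) hK
  have hxK : x ∈ closure Kᶜ := by rwa [closure_compl]
  exact closure_mono hKA hxK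

theorem Filter.Tendsto.not_seqMeshes_cocompact [TopologicalSpace X] {x : ℕ → X} {l : X}
    (hx : Tendsto x atTop (𝓝 l)) : ¬SeqMeshes x (cocompact X) := fun hmesh => by
  obtain ⟨n, -, hn⟩ := hmesh _ hx.isCompact_insert_range.compl_mem_cocompact 0
  exact hn (mem_insert_of_mem _ (mem_range_self n))

theorem stmt0_general [TopologicalSpace X] [Nonempty X]
    (hhemi : Hemicompact X) (htanaka : TanakaSpace X) :
    ∃ (x : X) (K : Set X), K ∈ 𝓝 x ∧ IsCompact K := by
  by_contra! hcon
  have hadh : (adh (cocompact X)).Nonempty := by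
    rw [adh_cocompact_eq_univ hcon]
    exact univ_nonempty
  obtain ⟨x, l, hx, hmesh⟩ := htanaka _ hhemi.isCountablyGenerated_cocompact hadh
  exact hx.not_seqMeshes_cocompact hmesh

theorem stmt0 [TopologicalSpace X] [T2Space X] [Nonempty X]
    (hhemi : Hemicompact X) (htanaka : TanakaSpace X) :
    ∃ (x : X) (K : Set X), K ∈ 𝓝 x ∧ IsCompact K :=
  stmt0_general hhemi htanaka
end

section
/- Let X be a homogeneous Hausdorff hemicompact topological space that is a Tanaka space. Then X is locally compact. -/
open Filter Topology Set

variable {X : Type*}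

/-- A homogeneous space: any point can be mapped to any other point by a
self-homeomorphism. -/
def Homogeneous (X : Type*) [TopologicalSpace X] : Prop :=
  ∀ x y : X, ∃ h : X ≃ₜ X, h x = y

theorem stmt1 [TopologicalSpace X] [T2Space X]
    (hhom : Homogeneous X) (hhemi : Hemicompact X) (htanaka : TanakaSpace X) :
    LocallyCompactSpace X := by

  obtain ⟨K₀, hKc₀, hK₀⟩ := hhemi
  -- replace by an increasing sequence of compacts
  set K : ℕ → Set X := fun n => ⋃ i ∈ Finset.range (n + 1), K₀ i with hKdef
  have hKc : ∀ n, IsCompact (K n) := fun n =>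
    (Finset.range (n + 1)).isCompact_biUnion (fun i _ => hKc₀ i)
  have hK : ∀ C : Set X, IsCompact C → ∃ n, C ⊆ K n := by
    intro C hC
    obtain ⟨n, hn⟩ := hK₀ C hC
    refine ⟨n, hn.trans ?_⟩
    exact subset_biUnion_of_mem (Finset.self_mem_range_succ n)
  have hKmono : Monotone K := by
    intro a b hab
    exact biUnion_subset_biUnion_left (Finset.range_subset_range.2 (by omega))
  set H : Filter X := ⨅ n, 𝓟 (K n)ᶜ with hH
  have hdir : Directed (· ≥ ·) fun n => (𝓟 (K n)ᶜ : Filter X) := by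
    intro a b
    refine ⟨max a b, ?_, ?_⟩ <;>
      exact principal_mono.mpr (compl_subset_compl.2 (hKmono (by omega)))
  have hmem : ∀ A, A ∈ H → ∃ m, (K m)ᶜ ⊆ A := by
    intro A hA
    rw [hH, mem_iInf_of_directed hdir] at hA
    exact hA
  have hcg : H.IsCountablyGenerated := by infer_instance
  have hempty : adh H = ∅ := by
    by_contra h
    obtain ⟨x, l, hxl, hmesh⟩ := htanaka H hcg (nonempty_iff_ne_empty.2 h)
    obtain ⟨m, hm⟩ := hK _ hxl.isCompact_insert_range
    obtain ⟨n, -, hn⟩ := hmesh (K m)ᶜ (mem_iInf_of_mem m (mem_principal_self _)) 0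
    exact hn (hm (subset_insert _ _ (mem_range_self n)))
  have key : ∀ x : X, ∃ m, K m ∈ 𝓝 x := by
    intro x
    have hx : x ∉ adh H := hempty ▸ notMem_empty x
    simp only [adh, mem_iInter, not_forall] at hx
    obtain ⟨A, hA, hxA⟩ := hx
    obtain ⟨m, hm⟩ := hmem A hA
    refine ⟨m, ?_⟩
    have : x ∉ closure (K m)ᶜ := fun h => hxA (closure_mono hm h)
    rw [closure_compl, mem_compl_iff, not_not] at this
    exact mem_interior_iff_mem_nhds.1 this
  have : WeaklyLocallyCompactSpace X := by
    refine ⟨fun x => ?_⟩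
    obtain ⟨m, hm⟩ := key x
    exact ⟨K m, hKc m, hm⟩
  infer_instance
end

section
/- If X is a strongly Fréchet topological space and Y is a bisequential topological space, then the product X × Y is strongly Fréchet. -/
open Filter Topology Set

/-- A strongly Fréchet space: whenever `(A n)` is a decreasing sequence of subsets and
`x` lies in the closure of every `A n`, there are points `p n ∈ A n` converging to `x`. -/
def StronglyFrechetSpace (X : Type*) [TopologicalSpace X] : Prop :=
  ∀ A : ℕ → Set X, (∀ n, A (n + 1) ⊆ A n) → ∀ x : X, (∀ n, x ∈ closure (A n)) →
    ∃ p : ℕ → X, (∀ n, p n ∈ A n) ∧ Tendsto p atTop (𝓝 x)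

/-- A bisequential space: every ultrafilter converging to a point contains a countably
generated filter converging to that point. -/
def Bisequential (Y : Type*) [TopologicalSpace Y] : Prop :=
  ∀ (U : Ultrafilter Y) (y : Y), (U : Filter Y) ≤ 𝓝 y →
    ∃ H : Filter Y, H.IsCountablyGenerated ∧ (U : Filter Y) ≤ H ∧ H ≤ 𝓝 y

theorem stmt9 {X Y : Type*} [TopologicalSpace X] [TopologicalSpace Y]
    (hX : StronglyFrechetSpace X) (hY : Bisequential Y) :
    StronglyFrechetSpace (X × Y) := by
  intro A hA z hz
  obtain ⟨x, y⟩ := z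
  have hAmono : Antitone A := antitone_nat_of_succ_le hA
  set F : Filter (X × Y) := ⨅ n, (𝓝 (x, y) ⊓ 𝓟 (A n)) with hF
  have hdir : Directed (· ≥ ·) (fun n => 𝓝 (x, y) ⊓ 𝓟 (A n)) := by
    intro m n
    exact ⟨max m n,
      inf_le_inf_left _ (principal_mono.2 (hAmono (le_max_left m n))),
      inf_le_inf_left _ (principal_mono.2 (hAmono (le_max_right m n)))⟩
  haveI : Nonempty (X × Y) := ⟨(x, y)⟩
  have hne : F.NeBot :=
    iInf_neBot_of_directed hdir (fun n => mem_closure_iff_clusterPt.1 (hz n))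
  let U : Ultrafilter (X × Y) := Ultrafilter.of F
  have hUF : (U : Filter (X × Y)) ≤ F := Ultrafilter.of_le F
  have hUnhds : (U : Filter (X × Y)) ≤ 𝓝 (x, y) :=
    hUF.trans ((iInf_le _ 0).trans inf_le_left)
  have hUA : ∀ n, A n ∈ U := fun n =>
    (hUF.trans ((iInf_le _ n).trans inf_le_right)) (mem_principal_self _)
  let V : Ultrafilter Y := U.map Prod.snd
  have hV : (V : Filter Y) ≤ 𝓝 y := by
    have : Tendsto Prod.snd (𝓝 (x, y)) (𝓝 y) := continuous_snd.tendsto (x, y)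
    exact (map_mono hUnhds).trans this
  obtain ⟨H, hHcg, hUH, hHy⟩ := hY V y hV
  haveI := hHcg
  obtain ⟨B, hB⟩ := H.exists_antitone_basis
  set C : ℕ → Set X := fun n => {a | ∃ b ∈ B n, (a, b) ∈ A n} with hCdef
  have hC : ∀ n, C (n + 1) ⊆ C n := by
    rintro n a ⟨b, hb, hab⟩
    exact ⟨b, hB.antitone (Nat.le_succ n) hb, hA n hab⟩
  have hxC : ∀ n, x ∈ closure (C n) := by
    intro n
    rw [mem_closure_iff_nhds]
    intro t ht
    have h2 : Prod.snd ⁻¹' B n ∈ U := hUH (hB.mem n)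
    have h3 : Prod.fst ⁻¹' t ∈ U := hUnhds (continuous_fst.tendsto (x, y) ht)
    obtain ⟨⟨a, b⟩, ⟨⟨hat, hbB⟩, habA⟩⟩ :=
      U.nonempty_of_mem (inter_mem (inter_mem h3 h2) (hUA n))
    exact ⟨a, hat, b, hbB, habA⟩
  obtain ⟨p, hp, hptend⟩ := hX C hC x hxC
  choose q hqB hqA using hp
  refine ⟨fun n => (p n, q n), hqA, ?_⟩
  have hq : Tendsto q atTop (𝓝 y) := by
    intro s hs
    obtain ⟨k, -, hk⟩ := hB.toHasBasis.mem_iff.1 (hHy hs)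
    rw [mem_map]
    filter_upwards [eventually_ge_atTop k] with n hn
    exact hk (hB.antitone hn (hqB n))
  exact hptend.prodMk_nhds hq
end

section
/- If X is a strongly Fréchet topological space and Y is a metrizable topological space, then the product X × Y is strongly Fréchet (in particular, Fréchet-Urysohn). -/
open Filter Topology Set

theorem stmt10 {X Y : Type*} [TopologicalSpace X] [TopologicalSpace Y]
    [TopologicalSpace.MetrizableSpace Y] (hX : StronglyFrechetSpace X) :
    StronglyFrechetSpace (X × Y) ∧ FrechetUrysohnSpace (X × Y) := by
  letI : MetricSpace Y := TopologicalSpace.metrizableSpaceMetric Y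
  have key : StronglyFrechetSpace (X × Y) := by
    rintro A hA ⟨x, y⟩ hz
    set B : ℕ → Set X := fun n => {a | ∃ b, (a, b) ∈ A n ∧ dist b y < 1 / (n + 1)} with hB
    have hBmono : ∀ n, B (n + 1) ⊆ B n := by
      rintro n a ⟨b, hb1, hb2⟩
      refine ⟨b, hA n hb1, hb2.trans_le ?_⟩
      apply one_div_le_one_div_of_le
      · positivity
      · push_cast; linarith
    have hclB : ∀ n, x ∈ closure (B n) := by
      intro n
      rw [mem_closure_iff_nhds]
      intro U hU
      have hmem : U ×ˢ Metric.ball y (1 / (n + 1)) ∈ 𝓝 (x, y) :=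
        prod_mem_nhds hU (Metric.ball_mem_nhds y (by positivity))
      obtain ⟨⟨a, b⟩, hab, habA⟩ := mem_closure_iff_nhds.mp (hz n) _ hmem
      exact ⟨a, hab.1, b, habA, hab.2⟩
    obtain ⟨p, hp, hpt⟩ := hX B hBmono x hclB
    choose q hq hqd using hp
    have hqy : Tendsto q atTop (𝓝 y) := by
      rw [tendsto_iff_dist_tendsto_zero]
      exact squeeze_zero (fun n => dist_nonneg) (fun n => (hqd n).le)
        tendsto_one_div_add_atTop_nhds_zero_nat
    exact ⟨fun n => (p n, q n), hq, hpt.prodMk_nhds hqy⟩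
  refine ⟨key, ⟨fun s z hz => ?_⟩⟩
  obtain ⟨p, hp, hpt⟩ := key (fun _ => s) (fun _ => subset_rfl) z (fun _ => hz)
  exact ⟨p, hp, hpt⟩
end

section
/- Every Fréchet-Urysohn topological group is strongly Fréchet. -/
/-!
By translation it suffices to treat the point `1`. If every `A n` contains a point that
specializes to `1`, these points already converge to `1`. Otherwise, from some index on the
`A n` avoid such points, and we pick sequences `τ n` in `A n` converging to `1`. Since
`τ 0 n * τ n k → τ 0 n` as `k → ∞` and `τ 0 n → 1`, the point `1` lies in the closure of the
products `τ 0 n * τ n k` that do not specialize to `1`, so by the Fréchet–Urysohn property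
some sequence of them converges to `1`. Along it the first index `n` tends to infinity: for
a fixed `n` the limit `1` would be inseparable either from `τ 0 n` (if `k → ∞`) or from one of
the products (if some `k` repeats). Multiplying by `(τ 0 n)⁻¹ → 1` leaves a diagonal sequence
`τ n k → 1` with `n → ∞`, whose terms lie in the `A n`.
-/

open Filter Topology Set

open scoped Pointwise

theorem Filter.exists_frequently_eq_of_not_tendsto_atTop {ι : Type*} {l : Filter ι} {f : ι → ℕ}
    (h : ¬ Tendsto f l atTop) : ∃ u, ∃ᶠ i in l, f i = u := by
  simp only [tendsto_atTop, not_forall, not_eventually, not_le] at h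
  obtain ⟨b, hb⟩ := h
  obtain ⟨u, -, hu⟩ := (finite_Iio b).frequently_exists (p := fun u i => f i = u) |>.1
    (hb.mono fun i hi => ⟨f i, hi, rfl⟩)
  exact ⟨u, hu⟩

section Specializes

variable {X ι : Type*} [TopologicalSpace X] {l : Filter ι} {f : ι → X} {x y : X}

theorem tendsto_nhds_of_eventually_specializes (h : ∀ᶠ i in l, f i ⤳ y) : Tendsto f l (𝓝 y) :=
  tendsto_nhds.2 fun _U hU hyU => h.mono fun _i hi => hi.mem_open hU hyU

theorem specializes_of_tendsto_const [l.NeBot] (h : Tendsto (fun _ : ι => x) l (𝓝 y)) : x ⤳ y :=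
  specializes_iff_pure.2 fun _U hU => (h.eventually_mem hU).exists.elim fun _ => id

variable [R1Space X]

theorem Filter.Tendsto.frequently_not_specializes [l.NeBot] (hf : Tendsto f l (𝓝 x))
    (hxy : ¬ x ⤳ y) : ∃ᶠ i in l, ¬ f i ⤳ y := fun h =>
  hxy (tendsto_nhds_unique_inseparable hf
    (tendsto_nhds_of_eventually_specializes (h.mono fun _ => not_not.1))).specializes

theorem inseparable_of_tendsto_comp_of_forall_not_specializes {s : ℕ → X} {k : ℕ → ℕ}
    (hs : Tendsto s atTop (𝓝 x)) (hsk : Tendsto (s ∘ k) atTop (𝓝 y))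
    (hy : ∀ i, ¬ s (k i) ⤳ y) : Inseparable x y := by
  by_cases hk : Tendsto k atTop atTop
  · exact tendsto_nhds_unique_inseparable (hs.comp hk) hsk
  obtain ⟨u, hu⟩ := exists_frequently_eq_of_not_tendsto_atTop hk
  obtain ⟨ψ, hψ, hψu⟩ := extraction_of_frequently_atTop hu
  have hconst : Tendsto (fun _ : ℕ => s u) atTop (𝓝 y) := by
    simpa [Function.comp_def, hψu] using hsk.comp hψ.tendsto_atTop
  exact absurd (specializes_of_tendsto_const hconst) (hψu 0 ▸ hy (ψ 0))

end Specializes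

section TopologicalGroup

variable {G : Type*} [Group G] [TopologicalSpace G] [IsTopologicalGroup G]

theorem one_mem_closure_setOf_mul_not_specializes {τ : ℕ → ℕ → G}
    (hτ : ∀ n, Tendsto (τ n) atTop (𝓝 1)) (hτ1 : ∀ n k, ¬ τ n k ⤳ 1) :
    (1 : G) ∈ closure {g | (∃ n k, g = τ 0 n * τ n k) ∧ ¬ g ⤳ 1} := by
  have hmem : ∀ n, τ 0 n ∈ closure {g | (∃ n k, g = τ 0 n * τ n k) ∧ ¬ g ⤳ 1} := fun n => by
    have hlim : Tendsto (fun k => τ 0 n * τ n k) atTop (𝓝 (τ 0 n)) := by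
      simpa using tendsto_const_nhds.mul (hτ n)
    exact mem_closure_of_frequently_of_tendsto
      ((hlim.frequently_not_specializes (hτ1 0 n)).mono fun k hk => ⟨⟨n, k, rfl⟩, hk⟩) hlim
  simpa using mem_closure_of_tendsto (hτ 0) (.of_forall hmem)

theorem tendsto_atTop_of_tendsto_mul_of_forall_not_specializes {τ : ℕ → ℕ → G}
    (hτ : ∀ n, Tendsto (τ n) atTop (𝓝 1)) {a : ℕ → G} (ha : ∀ v, ¬ a v ⤳ 1) {n k : ℕ → ℕ}
    (hlim : Tendsto (fun j => a (n j) * τ (n j) (k j)) atTop (𝓝 1))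
    (hnot : ∀ j, ¬ (a (n j) * τ (n j) (k j)) ⤳ 1) : Tendsto n atTop atTop := by
  by_contra hn
  obtain ⟨v, hv⟩ := exists_frequently_eq_of_not_tendsto_atTop hn
  obtain ⟨φ, hφ, hφv⟩ := extraction_of_frequently_atTop hv
  have : Inseparable (a v) 1 := by
    refine inseparable_of_tendsto_comp_of_forall_not_specializes (s := fun i => a v * τ v i)
      (k := k ∘ φ) ?_ ?_ fun i => ?_
    · simpa using tendsto_const_nhds.mul (hτ v)
    · simpa [Function.comp_def, hφv] using hlim.comp hφ.tendsto_atTop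
    · simpa [hφv] using hnot (φ i)
  exact ha v this.specializes

theorem exists_tendsto_atTop_and_tendsto_one [FrechetUrysohnSpace G] {τ : ℕ → ℕ → G}
    (hτ : ∀ n, Tendsto (τ n) atTop (𝓝 1)) (hτ1 : ∀ n k, ¬ τ n k ⤳ 1) :
    ∃ n k : ℕ → ℕ, Tendsto n atTop atTop ∧ Tendsto (fun j => τ (n j) (k j)) atTop (𝓝 1) := by
  obtain ⟨z, hzB, hz⟩ :=
    mem_closure_iff_seq_limit.1 (one_mem_closure_setOf_mul_not_specializes hτ hτ1)
  choose n k hnk using fun j => (hzB j).1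
  have hz1 : ∀ j, ¬ z j ⤳ 1 := fun j => (hzB j).2
  obtain rfl : z = fun j => τ 0 (n j) * τ (n j) (k j) := funext hnk
  have hn := tendsto_atTop_of_tendsto_mul_of_forall_not_specializes hτ (hτ1 0) hz hz1
  exact ⟨n, k, hn, by simpa using ((hτ 0).comp hn).inv.mul hz⟩

theorem exists_seq_mem_tendsto_one_of_antitone [FrechetUrysohnSpace G] {A : ℕ → Set G}
    (hA : Antitone A) (h1 : ∀ n, (1 : G) ∈ closure (A n)) :
    ∃ p : ℕ → G, (∀ n, p n ∈ A n) ∧ Tendsto p atTop (𝓝 1) := by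
  by_cases hK : ∀ n, ∃ g ∈ A n, g ⤳ 1
  · choose p hpA hp1 using hK
    exact ⟨p, hpA, tendsto_nhds_of_eventually_specializes (.of_forall hp1)⟩
  push Not at hK
  obtain ⟨m, hm⟩ := hK
  choose τ hτA hτ using fun n => mem_closure_iff_seq_limit.1 (h1 (m + n))
  obtain ⟨n, k, hn, hnk⟩ := exists_tendsto_atTop_and_tendsto_one hτ fun n k =>
    hm _ (hA (Nat.le_add_right m n) (hτA n k))
  obtain ⟨φ, hφ, hφn⟩ := extraction_forall_of_eventually fun i => tendsto_atTop.1 hn i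
  exact ⟨fun i => τ (n (φ i)) (k (φ i)),
    fun i => hA ((hφn i).trans (Nat.le_add_left _ _)) (hτA _ _), hnk.comp hφ.tendsto_atTop⟩

end TopologicalGroup

theorem stmt13 {G : Type*} [Group G] [TopologicalSpace G] [IsTopologicalGroup G]
    [FrechetUrysohnSpace G] : StronglyFrechetSpace G := by
  intro A hA x hx
  obtain ⟨p, hpA, hp⟩ := exists_seq_mem_tendsto_one_of_antitone (A := fun n => x⁻¹ • A n)
    (fun _ _ h => smul_set_mono (antitone_nat_of_succ_le hA h)) fun n => by
      rw [closure_smul]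
      exact ⟨x, hx n, inv_mul_cancel x⟩
  refine ⟨fun n => x * p n, fun n => ?_, by simpa using hp.const_mul x⟩
  simpa [mem_smul_set_iff_inv_smul_mem] using hpA n
end

section
/- Let G be a metrizable abelian topological group. If the product G × Ĝ of G with its Pontryagin dual is a k-space, then Ĝ is locally compact. -/
open Filter Topology Set

/-- A k-space: a set is closed as soon as its intersection with every compact set `K`
is closed in `K`. -/
def KSpace (X : Type*) [TopologicalSpace X] : Prop :=
  ∀ C : Set X, (∀ K : Set X, IsCompact K → IsClosed ((↑·) ⁻¹' C : Set K)) → IsClosed C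

/-!
Evaluation `X × C(X, Y) → Y` is continuous on `K × C(X, Y)` for compact `K`, so on a k-space
such as `G × Ĝ` it is continuous outright. Continuity at `(1, 1)` yields neighbourhoods `U` of
`1 ∈ G` and `N` of `1 ∈ Ĝ` such that every `χ ∈ N` maps `U` into a small compact arc `W`.
Halving `U` and the arc repeatedly shows that the characters mapping `U` into `W` are
equicontinuous; the set of them is closed in `𝕋 ^ G`, hence compact by Arzelà–Ascoli, and it is
a neighbourhood of `1` since it contains `N`.
-/

theorem KSpace.continuous_of_continuousOn {X Z : Type*} [TopologicalSpace X]
    [TopologicalSpace Z] (hX : KSpace X) {f : X → Z}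
    (hf : ∀ K, IsCompact K → ContinuousOn f K) : Continuous f :=
  continuous_iff_isClosed.2 fun _ hC ↦ hX _ fun K hK ↦
    hC.preimage (continuousOn_iff_continuous_domRestrict.1 (hf K hK))

theorem ContinuousMap.continuousOn_eval_of_isCompact {X Y : Type*} [TopologicalSpace X]
    [TopologicalSpace Y] [R1Space Y] {K : Set X} (hK : IsCompact K) :
    ContinuousOn (fun p : X × C(X, Y) ↦ p.2 p.1) (K ×ˢ univ) := by
  have : CompactSpace K := isCompact_iff_compactSpace.mp hK
  rw [continuousOn_iff_continuous_domRestrict]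
  have hpt : Continuous fun p : ↥(K ×ˢ (univ : Set C(X, Y))) ↦ (⟨p.1.1, p.2.1⟩ : K) :=
    (continuous_fst.comp continuous_subtype_val).subtype_mk _
  have hres : Continuous fun p : ↥(K ×ˢ (univ : Set C(X, Y))) ↦ p.1.2.restrict K :=
    (ContinuousMap.continuous_restrict K).comp (continuous_snd.comp continuous_subtype_val)
  exact continuous_eval.comp (hres.prodMk hpt)

namespace MonoidHom

theorem exists_mem_nhds_one_forall_mapsTo {X Y : Type*} [TopologicalSpace X] [Monoid X]
    [ContinuousMul X] [MulOneClass Y] (V : ℕ → Set Y)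
    (hV : ∀ {n x}, x ∈ V n → x * x ∈ V n → x ∈ V (n + 1)) (n : ℕ) {U : Set X}
    (hU : U ∈ 𝓝 1) :
    ∃ U' ∈ 𝓝 (1 : X), ∀ f : X →* Y, MapsTo f U (V 0) → MapsTo f U' (V n) := by
  induction n with
  | zero => exact ⟨U, hU, fun _ hf ↦ hf⟩
  | succ n ih =>
    obtain ⟨U', hU', hf⟩ := ih
    obtain ⟨U'', hU'', hmul⟩ := exists_nhds_one_split hU'
    refine ⟨U'', hU'', fun f hfU x hx ↦ hV ?_ ?_⟩
    · simpa using hf f hfU (hmul x hx 1 (mem_of_mem_nhds hU''))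
    · simpa using hf f hfU (hmul x hx x hx)

theorem equicontinuous_setOf_mapsTo {X Y : Type*} [TopologicalSpace X] [Group X]
    [IsTopologicalGroup X] [UniformSpace Y] [CommGroup Y] [IsUniformGroup Y] (V : ℕ → Set Y)
    (hV : ∀ {n x}, x ∈ V n → x * x ∈ V n → x ∈ V (n + 1))
    (hVo : (𝓝 1).HasBasis (fun _ ↦ True) V) {U : Set X} (hU : U ∈ 𝓝 1) :
    Equicontinuous fun f : {f : X →* Y | MapsTo f U (V 0)} ↦ (f : X → Y) := by
  refine equicontinuous_of_equicontinuousAt_one _ ?_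
  rw [hVo.uniformity_of_nhds_one.equicontinuousAt_iff_right]
  intro n _
  obtain ⟨U', hU', hf⟩ := exists_mem_nhds_one_forall_mapsTo V hV n hU
  filter_upwards [hU'] with x hx f
  simpa using hf f f.2 hx

end MonoidHom

namespace ContinuousMonoidHom

theorem continuous_eval_of_kSpace {X Y : Type*} [TopologicalSpace X] [Monoid X]
    [TopologicalSpace Y] [R1Space Y] [Monoid Y] (hk : KSpace (X × (X →ₜ* Y))) :
    Continuous fun p : X × (X →ₜ* Y) ↦ p.2 p.1 :=
  hk.continuous_of_continuousOn fun _ hK ↦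
    (ContinuousMap.continuousOn_eval_of_isCompact (hK.image continuous_fst)).comp
      (continuous_id.prodMap (isInducing_toContinuousMap X Y).continuous).continuousOn
      fun _ hp ↦ ⟨mem_image_of_mem _ hp, trivial⟩

theorem isCompact_setOf_mapsTo {X Y : Type*} [TopologicalSpace X] [Monoid X] [UniformSpace Y]
    [Monoid Y] [ContinuousMul Y] [T2Space Y] [CompactSpace Y] {U : Set X} {W : Set Y}
    (hW : IsClosed W) (h : Equicontinuous fun f : {f : X →* Y | MapsTo f U W} ↦ (f : X → Y)) :
    IsCompact {f : X →ₜ* Y | MapsTo f U W} := by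
  set T : Set C(X, Y) := (↑) '' {f : X →ₜ* Y | MapsTo f U W}
  set F := range fun f : {f : X →* Y | MapsTo f U W} ↦ (f : X → Y)
  have hTF : ContinuousMap.toFun '' T = F := by
    ext φ
    constructor
    · rintro ⟨-, ⟨f, hf, rfl⟩, rfl⟩
      exact ⟨⟨f.toMonoidHom, hf⟩, rfl⟩
    · rintro ⟨f, rfl⟩
      exact ⟨⟨f, h.continuous f⟩, ⟨⟨f, h.continuous f⟩, f.2, rfl⟩, rfl⟩
  have hF : F = pi U (fun _ ↦ W) ∩ range ((↑) : (X →* Y) → X → Y) := by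
    ext φ
    constructor
    · rintro ⟨f, rfl⟩
      exact ⟨f.2, f, rfl⟩
    · rintro ⟨hφ, f, rfl⟩
      exact ⟨⟨f, hφ⟩, rfl⟩
  have hFc : IsClosed F :=
    hF ▸ (isClosed_set_pi fun _ _ ↦ hW).inter (MonoidHom.isClosed_range_coe X Y)
  refine (isInducing_toContinuousMap X Y).isCompact_iff.2 <|
    ArzelaAscoli.isCompact_of_equicontinuous T (hTF ▸ hFc.isCompact) ?_
  rw [equicontinuous_iff_range, ← image_eq_range]
  exact hTF ▸ equicontinuous_iff_range.1 h

theorem locallyCompactSpace_of_continuousAt_eval {X Y : Type*} [TopologicalSpace X] [Group X]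
    [IsTopologicalGroup X] [UniformSpace Y] [CommGroup Y] [IsUniformGroup Y] [T0Space Y]
    [CompactSpace Y] (V : ℕ → Set Y) (hV : ∀ {n x}, x ∈ V n → x * x ∈ V n → x ∈ V (n + 1))
    (hVo : (𝓝 1).HasBasis (fun _ ↦ True) V)
    (h : ContinuousAt (fun p : X × (X →ₜ* Y) ↦ p.2 p.1) (1, 1)) :
    LocallyCompactSpace (X →ₜ* Y) := by
  obtain ⟨W, hW1, hWV, hWc⟩ := local_compact_nhds (hVo.mem_of_mem (i := 0) trivial)
  obtain ⟨U, hU, N, hN, hUN⟩ := mem_nhds_prod_iff.1 (h.preimage_mem_nhds (by simpa using hW1))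
  have hNW : {f : X →ₜ* Y | MapsTo f U W} ∈ 𝓝 1 :=
    mem_of_superset hN fun f hf x hx ↦ hUN (mk_mem_prod hx hf)
  have hequi : Equicontinuous fun f : {f : X →* Y | MapsTo f U W} ↦ (f : X → Y) :=
    (MonoidHom.equicontinuous_setOf_mapsTo V hV hVo hU).comp
      (Subtype.map _root_.id fun _ hf ↦ hf.mono_right hWV)
  exact TopologicalSpace.PositiveCompacts.locallyCompactSpace_of_group
    ⟨⟨_, isCompact_setOf_mapsTo hWc.isClosed hequi⟩, ⟨1, mem_interior_iff_mem_nhds.2 hNW⟩⟩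

end ContinuousMonoidHom

theorem Circle.mem_centeredArc_div_two_pow_succ {n : ℕ} {z : Circle}
    (h1 : z ∈ centeredArc (Real.pi / 2 ^ (n + 1)))
    (h2 : z * z ∈ centeredArc (Real.pi / 2 ^ (n + 1))) :
    z ∈ centeredArc (Real.pi / 2 ^ (n + 1 + 1)) := by
  have h1' : z ∈ centeredArc (Real.pi / (2 : ℕ)) :=
    centeredArc_mono (by gcongr; exact le_self_pow₀ one_le_two n.succ_ne_zero) h1
  simpa [div_div, ← pow_succ] using mem_centeredArc_div (n := 2)
    (div_le_self Real.pi_nonneg (one_le_pow₀ one_le_two)) h1' (by simpa [sq] using h2)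

theorem stmt16_general {G : Type*} [CommGroup G] [TopologicalSpace G] [IsTopologicalGroup G]
    (hk : KSpace (G × PontryaginDual G)) :
    LocallyCompactSpace (PontryaginDual G) :=
  ContinuousMonoidHom.locallyCompactSpace_of_continuousAt_eval
    (fun n ↦ Circle.centeredArc (Real.pi / 2 ^ (n + 1)))
    Circle.mem_centeredArc_div_two_pow_succ Circle.hasBasis_centeredArc_div_two_pow
    (ContinuousMonoidHom.continuous_eval_of_kSpace hk).continuousAt

theorem stmt16 {G : Type*} [CommGroup G] [TopologicalSpace G] [IsTopologicalGroup G]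
    [TopologicalSpace.MetrizableSpace G] (hk : KSpace (G × PontryaginDual G)) :
    LocallyCompactSpace (PontryaginDual G) :=
  stmt16_general hk
end
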